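/- Let n, p be positive integers, let A ∈ ℍ^{n×n} be Hermitian, and let N ∈ ℍ^{p×p} be a diagonal matrix with real diagonal entries. Then for all X, Y ∈ ℍ^{n×p}, the real-valued function of a real variable t ↦ re(tr((X + tY)ᴴ A (X + tY) N)) is differentiable at t = 0 with derivative re(tr((2AXN)ᴴ Y)). In other words, the Euclidean gradient of the function X ↦ re(tr(XᴴAXN)) on ℍ^{n×p} is 2AXN. -/

import Mathlib

/-!
Along the line `X + tY` the function is a quadratic polynomial in `t` whose linear coefficient is
`re tr(XᴴAYN) + re tr(YᴴAXN)`. Although ℍ is not commutative, `re (ab) = re (ba)` and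
`re q̄ = re q`, so `re ∘ tr` is invariant under cyclic permutations and conjugate transposition;
for Hermitian `A` and `N` this makes both terms equal to `re tr((AXN)ᴴY)`.
-/

open Matrix
open scoped Quaternion

namespace Quaternion

variable {R : Type*} [CommRing R]

theorem re_mul_comm (a b : ℍ[R]) : (a * b).re = (b * a).re := by
  simp only [re_mul]
  ring

theorem re_sum {ι : Type*} (s : Finset ι) (f : ι → ℍ[R]) :
    (∑ i ∈ s, f i).re = ∑ i ∈ s, (f i).re :=
  map_sum (QuaternionAlgebra.reₗ _ _ _) f s

instance [StarRing R] [TrivialStar R] : StarModule R ℍ[R] where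
  star_smul r a := by rw [star_trivial r]; exact star_smul r a

end Quaternion

namespace Matrix

variable {m n : Type*} [Fintype m] [Fintype n]

section CommRing

variable {R : Type*} [CommRing R]

theorem re_trace_mul_comm (P : Matrix m n ℍ[R]) (Q : Matrix n m ℍ[R]) :
    (P * Q).trace.re = (Q * P).trace.re := by
  simp only [trace, diag, mul_apply, Quaternion.re_sum]
  rw [Finset.sum_comm]
  simp only [Quaternion.re_mul_comm]

theorem re_trace_conjTranspose (M : Matrix n n ℍ[R]) : Mᴴ.trace.re = M.trace.re := by
  rw [trace_conjTranspose, Quaternion.re_star]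

variable {A : Matrix m m ℍ[R]} {N : Matrix n n ℍ[R]}

theorem IsHermitian.re_trace_conjTranspose_mul_mul_mul_swap (hA : A.IsHermitian)
    (hN : N.IsHermitian) (X Y : Matrix m n ℍ[R]) :
    (Yᴴ * A * X * N).trace.re = (Xᴴ * A * Y * N).trace.re := by
  rw [← re_trace_conjTranspose]
  simp only [conjTranspose_mul, conjTranspose_conjTranspose, hA.eq, hN.eq, Matrix.mul_assoc]
  rw [re_trace_mul_comm]
  simp only [Matrix.mul_assoc]

theorem IsHermitian.re_trace_mul_mul_conjTranspose_mul (hA : A.IsHermitian)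
    (hN : N.IsHermitian) (X Y : Matrix m n ℍ[R]) :
    ((A * X * N)ᴴ * Y).trace.re = (Xᴴ * A * Y * N).trace.re := by
  simp only [conjTranspose_mul, hA.eq, hN.eq, Matrix.mul_assoc]
  rw [re_trace_mul_comm]
  simp only [Matrix.mul_assoc]

end CommRing

theorem re_trace_conjTranspose_add_smul_mul (A : Matrix m m ℍ[ℝ]) (N : Matrix n n ℍ[ℝ])
    (X Y : Matrix m n ℍ[ℝ]) (t : ℝ) :
    ((X + t • Y)ᴴ * A * (X + t • Y) * N).trace.re =
      (Xᴴ * A * X * N).trace.re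
        + t * ((Xᴴ * A * Y * N).trace.re + (Yᴴ * A * X * N).trace.re)
        + t ^ 2 * (Yᴴ * A * Y * N).trace.re := by
  simp only [conjTranspose_add, conjTranspose_smul, star_trivial, Matrix.add_mul, Matrix.mul_add,
    smul_mul, Matrix.mul_smul, trace_add, trace_smul, Quaternion.re_add, Quaternion.re_smul,
    smul_eq_mul]
  ring

theorem hasDerivAt_re_trace_conjTranspose_add_smul_mul (A : Matrix m m ℍ[ℝ])
    (N : Matrix n n ℍ[ℝ]) (X Y : Matrix m n ℍ[ℝ]) :
    HasDerivAt (fun t : ℝ => ((X + t • Y)ᴴ * A * (X + t • Y) * N).trace.re)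
      ((Xᴴ * A * Y * N).trace.re + (Yᴴ * A * X * N).trace.re) 0 := by
  have quadratic (a b c : ℝ) : HasDerivAt (fun t : ℝ => a + t * b + t ^ 2 * c) b 0 := by
    refine ((((hasDerivAt_id' (0 : ℝ)).mul_const b).const_add a).fun_add
      ((hasDerivAt_pow 2 (0 : ℝ)).mul_const c)).congr_deriv ?_
    simp
  simp_rw [re_trace_conjTranspose_add_smul_mul]
  exact quadratic _ _ _

end Matrix

theorem euclidean_gradient_re_trace_XHAXN_general (n p : ℕ)
    (A : Matrix (Fin n) (Fin n) ℍ[ℝ]) (hA : Aᴴ = A)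
    (μ : Fin p → ℝ) (N : Matrix (Fin p) (Fin p) ℍ[ℝ])
    (hN : N = Matrix.diagonal fun r => ((μ r : ℝ) : ℍ[ℝ]))
    (X Y : Matrix (Fin n) (Fin p) ℍ[ℝ]) :
    HasDerivAt (fun t : ℝ => (((X + t • Y)ᴴ * A * (X + t • Y) * N).trace).re)
      (((((2 : ℝ) • (A * X * N))ᴴ * Y).trace).re) 0 := by
  have hAH : A.IsHermitian := hA
  have hNH : N.IsHermitian := by
    subst hN
    exact isHermitian_diagonal_of_self_adjoint _ (funext fun r => Quaternion.star_coe (μ r))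
  rw [conjTranspose_smul, star_trivial, smul_mul, trace_smul, Quaternion.re_smul, smul_eq_mul,
    hAH.re_trace_mul_mul_conjTranspose_mul hNH, two_mul]
  nth_rw 2 [← hAH.re_trace_conjTranspose_mul_mul_mul_swap hNH]
  exact hasDerivAt_re_trace_conjTranspose_add_smul_mul A N X Y

/-- For Hermitian `A ∈ ℍ^{n×n}` and a real diagonal `N ∈ ℍ^{p×p}`, the function
`t ↦ re(tr((X+tY)ᴴ A (X+tY) N))` has derivative `re(tr((2AXN)ᴴ Y))` at `t = 0`;
i.e. the Euclidean gradient of `X ↦ re(tr(XᴴAXN))` is `2AXN`. -/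
theorem euclidean_gradient_re_trace_XHAXN (n p : ℕ) (hn : 0 < n) (hp : 0 < p)
    (A : Matrix (Fin n) (Fin n) ℍ[ℝ]) (hA : Aᴴ = A)
    (μ : Fin p → ℝ) (N : Matrix (Fin p) (Fin p) ℍ[ℝ])
    (hN : N = Matrix.diagonal fun r => ((μ r : ℝ) : ℍ[ℝ]))
    (X Y : Matrix (Fin n) (Fin p) ℍ[ℝ]) :
    HasDerivAt (fun t : ℝ => (((X + t • Y)ᴴ * A * (X + t • Y) * N).trace).re)
      (((((2 : ℝ) • (A * X * N))ᴴ * Y).trace).re) 0 :=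
  euclidean_gradient_re_trace_XHAXN_general n p A hA μ N hN X Y
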